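/- arXiv:2001.05256 — 2 statements merged into one kernel-verified Lean document; each statement's English description precedes it below -/
import Mathlib

section
/- In the construction above, each added edge v w_D is a bridge of H, and deleting the edge v w_D from H disconnects exactly the vertex set of the component D from v; in particular the component of H \ (v w_D) not containing v has exactly |D| vertices. -/
/-!
Once `s(v, w D)` is removed, no edge has exactly one end in `D`: edges of `G` stay inside
their components, and every other added edge joins `v ∉ D` to the vertex `w E` of a component
`E ≠ D`. Hence no vertex of `D` is reachable from `v`. Every vertex outside `D` still is, either
within the component of `v` or through the added edge into its own component. As `w D ∈ D`,
the removed edge is in particular a bridge.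
-/

namespace SimpleGraph

variable {V : Type*}

theorem Reachable.mem_of_forall_adj_mem {G : SimpleGraph V} {S : Set V}
    (hS : ∀ ⦃a b⦄, G.Adj a b → a ∈ S → b ∈ S) {a b : V} (hab : G.Reachable a b)
    (ha : a ∈ S) : b ∈ S := by
  obtain ⟨p⟩ := hab
  by_contra hb
  obtain ⟨d, -, hd, hd'⟩ := p.exists_boundary_dart S ha hb
  exact hd' (hS d.adj hd)

def joinComponents (G : SimpleGraph V) (v : V) (w : G.ConnectedComponent → V) :
    SimpleGraph V :=
  G ⊔ fromEdgeSet
    {e | ∃ D : G.ConnectedComponent, D ≠ G.connectedComponentMk v ∧ e = s(v, w D)}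

section joinComponents

variable {G : SimpleGraph V} {v : V} {w : G.ConnectedComponent → V} {D : G.ConnectedComponent}

theorem joinComponents_adj {a b : V} :
    (G.joinComponents v w).Adj a b ↔
      G.Adj a b ∨ a ≠ b ∧ ∃ E, E ≠ G.connectedComponentMk v ∧ s(a, b) = s(v, w E) := by
  simp [joinComponents, and_comm]

theorem joinComponents_adj_of_ne (hw : ∀ D, w D ∈ D.supp) {E : G.ConnectedComponent}
    (hE : E ≠ G.connectedComponentMk v) : (G.joinComponents v w).Adj v (w E) :=
  joinComponents_adj.2 <| .inr ⟨fun h => hE (h ▸ hw E).symm, E, hE, rfl⟩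

theorem le_joinComponents_deleteEdges (hw : ∀ D, w D ∈ D.supp)
    (hD : D ≠ G.connectedComponentMk v) :
    G ≤ (G.joinComponents v w).deleteEdges {s(v, w D)} := by
  refine le_sdiff.2 ⟨le_sup_left, (disjoint_fromEdgeSet _ _).2 ?_⟩
  exact Set.disjoint_singleton_right.2 fun h =>
    hD (ConnectedComponent.mem_supp_of_adj_mem_supp D (hw D) h.symm).symm

theorem joinComponents_deleteEdges_adj_mem_supp (hw : ∀ D, w D ∈ D.supp)
    (hD : D ≠ G.connectedComponentMk v) {a b : V}
    (hab : ((G.joinComponents v w).deleteEdges {s(v, w D)}).Adj a b) (ha : a ∈ D.supp) :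
    b ∈ D.supp := by
  rw [deleteEdges_adj, joinComponents_adj, Set.mem_singleton_iff] at hab
  obtain ⟨hab | ⟨-, E, hE, he⟩, hne⟩ := hab
  · exact ConnectedComponent.mem_supp_of_adj_mem_supp D ha hab
  · have hED : E ≠ D := by rintro rfl; exact hne he
    exfalso
    rcases Sym2.eq_iff.1 he with ⟨rfl, -⟩ | ⟨rfl, -⟩
    · exact hD ha.symm
    · exact hED ((hw E).symm.trans ha)

theorem joinComponents_deleteEdges_reachable (hw : ∀ D, w D ∈ D.supp)
    (hD : D ≠ G.connectedComponentMk v) {x : V} (hx : x ∉ D.supp) :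
    ((G.joinComponents v w).deleteEdges {s(v, w D)}).Reachable v x := by
  have hG := le_joinComponents_deleteEdges hw hD
  by_cases hxv : G.connectedComponentMk x = G.connectedComponentMk v
  · exact (ConnectedComponent.exact hxv.symm).mono hG
  · generalize hE : G.connectedComponentMk x = E at hxv
    have hadj : ((G.joinComponents v w).deleteEdges {s(v, w D)}).Adj v (w E) := by
      refine (deleteEdges_adj ..).2 ⟨joinComponents_adj_of_ne hw hxv, fun he => ?_⟩
      rcases Sym2.eq_iff.1 he with ⟨-, h⟩ | ⟨h, -⟩
      · exact hx (hE.trans ((h ▸ hw E).symm.trans (hw D)))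
      · exact hD (h ▸ hw D).symm
    exact hadj.reachable.trans ((ConnectedComponent.exact ((hw E).trans hE.symm)).mono hG)

theorem setOf_not_reachable_joinComponents_deleteEdges (hw : ∀ D, w D ∈ D.supp)
    (hD : D ≠ G.connectedComponentMk v) :
    {x | ¬ ((G.joinComponents v w).deleteEdges {s(v, w D)}).Reachable v x} = D.supp := by
  ext x
  refine ⟨fun h => by_contra fun hx => h (joinComponents_deleteEdges_reachable hw hD hx),
    fun hx h => hD ?_⟩
  exact (h.symm.mem_of_forall_adj_mem
    (fun _ _ => joinComponents_deleteEdges_adj_mem_supp hw hD) hx).symm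

end joinComponents

end SimpleGraph

theorem added_edges_are_bridges_general {V : Type*} (G : SimpleGraph V)
    (v : V) (w : G.ConnectedComponent → V) (hw : ∀ D, w D ∈ D.supp)
    (H : SimpleGraph V)
    (hH : H = G ⊔ SimpleGraph.fromEdgeSet
        {e | ∃ D : G.ConnectedComponent, D ≠ G.connectedComponentMk v ∧
          e = s(v, w D)}) :
    ∀ D : G.ConnectedComponent, D ≠ G.connectedComponentMk v →
      H.IsBridge s(v, w D) ∧
      {x : V | ¬ (H.deleteEdges {s(v, w D)}).Reachable v x} = D.supp := by
  subst hH
  intro D hD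
  have hset := SimpleGraph.setOf_not_reachable_joinComponents_deleteEdges hw hD
  exact ⟨SimpleGraph.isBridge_iff.2 (hset.ge (hw D)), hset⟩

/-- In the construction joining `v` to a vertex `w D` of each component `D ≠ C`
(where `C` is the component of `v`), each added edge `s(v, w D)` is a bridge of `H`,
and the component of `H \ s(v, w D)` not containing `v` is exactly `D`. -/
theorem added_edges_are_bridges {V : Type*} [Fintype V] (G : SimpleGraph V)
    (v : V) (w : G.ConnectedComponent → V) (hw : ∀ D, w D ∈ D.supp)
    (H : SimpleGraph V)
    (hH : H = G ⊔ SimpleGraph.fromEdgeSet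
        {e | ∃ D : G.ConnectedComponent, D ≠ G.connectedComponentMk v ∧
          e = s(v, w D)}) :
    ∀ D : G.ConnectedComponent, D ≠ G.connectedComponentMk v →
      H.IsBridge s(v, w D) ∧
      {x : V | ¬ (H.deleteEdges {s(v, w D)}).Reachable v x} = D.supp :=
  added_edges_are_bridges_general G v w hw H hH
end

section
/- If A is a bridge-addable class of graphs, C the class of connected graphs in A, and R_n a uniformly random unlabelled n-vertex graph from A (with Ã_n nonempty), then the probability that R_n is connected is at least 1/(2n). -/
/-- Two graphs (in a class) are related iff they are isomorphic. -/
def graphSetoid (n : ℕ) (A : SimpleGraph (Fin n) → Prop) :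
    Setoid {G : SimpleGraph (Fin n) // A G} where
  r G H := Nonempty (G.1 ≃g H.1)
  iseqv := ⟨fun G => ⟨RelIso.refl _⟩, fun ⟨φ⟩ => ⟨φ.symm⟩,
    fun ⟨φ⟩ ⟨ψ⟩ => ⟨φ.trans ψ⟩⟩

/-- The number of unlabelled `n`-vertex graphs in the class `A`. -/
noncomputable def unlabelledCount (n : ℕ) (A : SimpleGraph (Fin n) → Prop) : ℕ :=
  Nat.card (Quotient (graphSetoid n A))

/-- Two vertex-rooted graphs are related iff there is an isomorphism mapping
root to root. -/
def rootedSetoid (n : ℕ) (C : SimpleGraph (Fin n) → Prop) :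
    Setoid {p : SimpleGraph (Fin n) × Fin n // C p.1} where
  r p q := ∃ φ : p.1.1 ≃g q.1.1, φ p.1.2 = q.1.2
  iseqv := ⟨fun p => ⟨RelIso.refl _, rfl⟩,
    fun {p q} ⟨φ, h⟩ => ⟨φ.symm, by simp [← h]⟩,
    fun {p q r} ⟨φ, h⟩ ⟨ψ, h'⟩ => ⟨φ.trans ψ, by simp [h, h']⟩⟩

/-- The number of unlabelled vertex-rooted `n`-vertex graphs in the class `C`. -/
noncomputable def rootedCount (n : ℕ) (C : SimpleGraph (Fin n) → Prop) : ℕ :=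
  Nat.card (Quotient (rootedSetoid n C))

/-- A class of graphs is bridge-addable if adding an edge between two vertices in
distinct components of a member yields a member. -/
def BridgeAddable (n : ℕ) (A : SimpleGraph (Fin n) → Prop) : Prop :=
  ∀ G, A G → ∀ u v : Fin n, ¬ G.Reachable u v →
    A (G ⊔ SimpleGraph.fromEdgeSet {s(u, v)})

/-- A class of graphs is closed under isomorphism. -/
def IsoClosed (n : ℕ) (A : SimpleGraph (Fin n) → Prop) : Prop :=
  ∀ G H : SimpleGraph (Fin n), Nonempty (G ≃g H) → A G → A H

/-!
A disconnected graph `G` in `A` is recovered from a connected graph `H` in `A` by deleting a star: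
join a vertex `r` of a smallest component of `G` to one vertex of each other component (`H ∈ A` by
bridge-addability). So the unlabelled disconnected members inject into pairs of an unlabelled
connected member and a star cut of it, and it suffices to show that a connected graph on `n`
vertices has fewer than `2n` star cuts. The star cuts with a given root `r` are nested, and a vertex
`v` that lies in one of them but not in another is the far end of a *light branch* at `r`: a bridge
`rv` whose `v` side has fewer than `n / 2` vertices. Every vertex is the far end of at most one
light branch, and some vertex of none, which bounds the number of star cuts by `n + (n - 1)`.
-/

open Finset

lemma Set.card_le_ncard_add_ncard {V : Type*} [Fintype V] {s t : Set V}
    (h : ∀ x, x ∈ s ∨ x ∈ t) :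
    Fintype.card V ≤ s.ncard + t.ncard :=
  calc Fintype.card V = (Set.univ : Set V).ncard := by simp
    _ ≤ (s ∪ t).ncard := Set.ncard_le_ncard fun x _ => h x
    _ ≤ s.ncard + t.ncard := Set.ncard_union_le s t

namespace SimpleGraph

variable {V V' : Type*}

section Reachability

variable {G G' : SimpleGraph V} {x y v : V}

lemma Reachable.mem_of_adj_closed {S : Set V} (hS : ∀ a b, G.Adj a b → a ∈ S → b ∈ S)
    (h : G.Reachable x y) (hx : x ∈ S) : y ∈ S := by
  by_contra hy
  obtain ⟨p⟩ := h
  obtain ⟨d, -, hd, hd'⟩ := p.exists_boundary_dart S hx hy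
  exact hd' (hS _ _ d.adj hd)

lemma Reachable.mono_of_not_reachable (hGG' : ∀ a b, G.Adj a b → a ≠ v → b ≠ v → G'.Adj a b)
    (hxv : ¬ G.Reachable x v) (h : G.Reachable x y) : G'.Reachable x y := by
  refine (h.mem_of_adj_closed (S := {z | G.Reachable x z ∧ G'.Reachable x z}) ?_
    ⟨.rfl, .rfl⟩).2
  rintro a b hab ⟨hGa, hG'a⟩
  have hGb : G.Reachable x b := hGa.trans hab.reachable
  refine ⟨hGb, hG'a.trans (hGG' a b hab ?_ ?_).reachable⟩
  · rintro rfl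
    exact hxv hGa
  · rintro rfl
    exact hxv hGb

lemma Iso.ncard_setOf_reachable {G' : SimpleGraph V'} (ψ : G ≃g G') (x : V) :
    {y | G'.Reachable (ψ x) y}.ncard = {y | G.Reachable x y}.ncard := by
  rw [← Nat.card_coe_set_eq, ← Nat.card_coe_set_eq]
  exact (Nat.card_congr (ψ.toEquiv.subtypeEquiv fun _ => Iso.reachable_iff.symm)).symm

end Reachability

def starEdges (r : V) (W : Finset V) : Set (Sym2 V) := (s(r, ·)) '' W

@[simp] lemma mk_mem_starEdges {r a b : V} {W : Finset V} :
    s(a, b) ∈ starEdges r W ↔ a = r ∧ b ∈ W ∨ b = r ∧ a ∈ W := by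
  simp only [starEdges, Set.mem_image, Finset.mem_coe, Sym2.eq_iff]
  aesop

/-- `H` arises from a disconnected graph by joining a vertex `r` of a smallest component to one
vertex of each other component, `W` being the set of those vertices. -/
structure IsStarCut (H : SimpleGraph V) (r : V) (W : Finset V) : Prop where
  nonempty : W.Nonempty
  adj : ∀ v ∈ W, H.Adj r v
  not_reachable_root : ∀ v ∈ W, ¬ (H.deleteEdges (starEdges r W)).Reachable r v
  not_reachable : ∀ v ∈ W, ∀ w ∈ W, v ≠ w → ¬ (H.deleteEdges (starEdges r W)).Reachable v w
  reachable : ∀ x, (H.deleteEdges (starEdges r W)).Reachable r x ∨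
    ∃ v ∈ W, (H.deleteEdges (starEdges r W)).Reachable v x
  ncard_le : ∀ v ∈ W, {x | (H.deleteEdges (starEdges r W)).Reachable r x}.ncard ≤
    {x | (H.deleteEdges (starEdges r W)).Reachable v x}.ncard

def branch (H : SimpleGraph V) (r v : V) : Set V :=
  {x | (H.deleteEdges {s(r, v)}).Reachable v x}

def IsLightBranch [Fintype V] (H : SimpleGraph V) (r v : V) : Prop :=
  H.Adj r v ∧ H.IsBridge s(r, v) ∧ 2 * (H.branch r v).ncard < Fintype.card V

section Branch

variable {H G : SimpleGraph V} {r v : V}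

lemma insert_branch_subset (hr : r ∉ H.branch r v) (hadj : G.Adj r v)
    (hHG : ∀ a b, H.Adj a b → a ≠ r → b ≠ r → G.Adj a b) :
    insert r (H.branch r v) ⊆ {x | G.Reachable r x} := by
  rintro x (rfl | hx)
  · exact Reachable.rfl
  · exact hadj.reachable.trans <|
      Reachable.mono_of_not_reachable (fun a b hab => hHG a b (deleteEdges_le _ hab)) hr hx

lemma ncard_branch_lt [Finite V] (hr : r ∉ H.branch r v) (hadj : G.Adj r v)
    (hHG : ∀ a b, H.Adj a b → a ≠ r → b ≠ r → G.Adj a b) :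
    (H.branch r v).ncard < {x | G.Reachable r x}.ncard := by
  rw [← Nat.add_one_le_iff, ← Set.ncard_insert_of_notMem hr]
  exact Set.ncard_le_ncard (insert_branch_subset hr hadj hHG)

lemma mem_branch_or_mem_branch (hH : H.Preconnected) (r v x : V) :
    x ∈ H.branch r v ∨ x ∈ H.branch v r := by
  refine (hH v x).mem_of_adj_closed (S := {x | x ∈ H.branch r v ∨ x ∈ H.branch v r}) ?_
    (Or.inl Reachable.rfl)
  rintro a b hab ha
  by_cases he : s(a, b) = s(r, v)
  · rcases Sym2.eq_iff.1 he with ⟨-, rfl⟩ | ⟨-, rfl⟩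
    exacts [Or.inl Reachable.rfl, Or.inr Reachable.rfl]
  · have hab' : (H.deleteEdges {s(r, v)}).Adj a b := by simp [hab, he]
    simp only [branch, Set.mem_ofPred_eq, Sym2.eq_swap (a := v)] at ha ⊢
    exact ha.imp (·.trans hab'.reachable) (·.trans hab'.reachable)

end Branch

namespace IsLightBranch

variable [Fintype V] {H : SimpleGraph V} {r r' v : V}

lemma not_mem_branch (h : H.IsLightBranch r v) : r ∉ H.branch r v :=
  fun hr => isBridge_iff.1 h.2.1 hr.symm

lemma not_mem_branch_swap (h : H.IsLightBranch r v) : v ∉ H.branch v r :=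
  fun hv => isBridge_iff.1 (Sym2.eq_swap ▸ h.2.1) hv.symm

lemma not_swap (hH : H.Preconnected) (h : H.IsLightBranch r v) : ¬ H.IsLightBranch v r :=
  fun h' => by
    have := Set.card_le_ncard_add_ncard (mem_branch_or_mem_branch hH r v)
    have := h.2.2
    have := h'.2.2
    omega

/-- The `v` sides of two light branches at `v` would cover the whole graph. -/
lemma eq (hH : H.Preconnected) (h : H.IsLightBranch r v) (h' : H.IsLightBranch r' v) :
    r = r' := by
  by_contra hne
  have hcover : ∀ x, x ∈ H.branch r v ∨ x ∈ H.branch r' v := fun x =>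
    (em _).imp_right fun hx => insert_branch_subset (G := H.deleteEdges {s(r', v)})
      h.not_mem_branch_swap
      (by simp [h.1.symm, h.1.ne, hne])
      (fun a b hab ha hb => by simp [hab, ha, hb])
      (Set.mem_insert_of_mem _ ((mem_branch_or_mem_branch hH r v x).resolve_left hx))
  have := Set.card_le_ncard_add_ncard hcover
  have := h.2.2
  have := h'.2.2
  omega

end IsLightBranch

/-- Some root of a light branch with a largest side has no light branch towards it. -/
lemma exists_forall_not_isLightBranch [Fintype V] {H : SimpleGraph V} (hH : H.Connected) :
    ∃ x, ∀ r, ¬ H.IsLightBranch r x := by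
  classical
  by_cases hex : ∃ p : V × V, H.IsLightBranch p.1 p.2
  swap
  · simp only [not_exists] at hex
    exact ⟨hH.nonempty.some, fun r => hex (r, _)⟩
  obtain ⟨⟨r, v⟩, hrv, hmax⟩ :=
    (univ.filter fun p : V × V => H.IsLightBranch p.1 p.2).exists_max_image
      (fun p => (H.branch p.1 p.2).ncard) (by simpa [Finset.filter_nonempty_iff] using hex)
  simp only [mem_filter, mem_univ, true_and] at hrv hmax
  refine ⟨r, fun ρ hρ => ?_⟩
  have hρv : ρ ≠ v := by
    rintro rfl
    exact hrv.not_swap hH.preconnected hρ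
  have hlt : (H.branch r v).ncard < (H.branch ρ r).ncard :=
    ncard_branch_lt (G := H.deleteEdges {s(ρ, r)}) hrv.not_mem_branch
      (by simp [hrv.1, hrv.1.ne', hρv.symm])
      (fun a b hab ha hb => by simp [hab, ha, hb])
  exact absurd (hmax (ρ, r) hρ) (not_le.2 hlt)

namespace IsStarCut

variable {H : SimpleGraph V} {r v : V} {W W' : Finset V}

lemma reachable_of_root (h : IsStarCut H r W) (x : V) : H.Reachable r x := by
  rcases h.reachable x with hx | ⟨v, hv, hvx⟩
  · exact hx.mono (deleteEdges_le _)
  · exact (h.adj v hv).reachable.trans (hvx.mono (deleteEdges_le _))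

lemma connected (h : IsStarCut H r W) : H.Connected :=
  (connected_iff_exists_forall_reachable H).2 ⟨r, h.reachable_of_root⟩

lemma two_mul_ncard_le [Fintype V] (h : IsStarCut H r W) :
    2 * {x | (H.deleteEdges (starEdges r W)).Reachable r x}.ncard ≤ Fintype.card V := by
  obtain ⟨v, hv⟩ := h.nonempty
  have hmin := h.ncard_le v hv
  set G := H.deleteEdges (starEdges r W)
  have hdisj : Disjoint {x | G.Reachable r x} {x | G.Reachable v x} :=
    Set.disjoint_left.2 fun x hrx hvx => h.not_reachable_root v hv (hrx.trans hvx.symm)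
  have hunion := Set.ncard_union_eq hdisj
  have hle := Set.ncard_le_card ({x | G.Reachable r x} ∪ {x | G.Reachable v x})
  rw [Nat.card_eq_fintype_card] at hle
  omega

/-- The only edge leaving the component of `v ∈ W` in `H` is `rv`. -/
lemma branch_eq (h : IsStarCut H r W) (hv : v ∈ W) :
    H.branch r v = {x | (H.deleteEdges (starEdges r W)).Reachable v x} := by
  ext x
  refine ⟨fun hx => hx.mem_of_adj_closed ?_ Reachable.rfl,
    fun hx => hx.mono (deleteEdges_anti (Set.singleton_subset_iff.2 (by simp [hv])))⟩
  rintro a b hab (ha : (H.deleteEdges (starEdges r W)).Reachable v a)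
  rw [deleteEdges_adj, Set.mem_singleton_iff] at hab
  by_cases hstar : s(a, b) ∈ starEdges r W
  · rw [mk_mem_starEdges] at hstar
    rcases hstar with ⟨rfl, -⟩ | ⟨rfl, haW⟩
    · exact absurd ha.symm (h.not_reachable_root v hv)
    · obtain rfl : v = a := by_contra fun hne => h.not_reachable v hv a haW hne ha
      exact absurd Sym2.eq_swap hab.2
  · exact ha.trans (deleteEdges_adj.2 ⟨hab.1, hstar⟩).reachable

lemma not_mem_branch (h : IsStarCut H r W) (hv : v ∈ W) : r ∉ H.branch r v := by
  rw [h.branch_eq hv]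
  exact fun hr => h.not_reachable_root v hv hr.symm

lemma ncard_le_ncard_branch (h : IsStarCut H r W) (hv : v ∈ W) :
    {x | (H.deleteEdges (starEdges r W)).Reachable r x}.ncard ≤ (H.branch r v).ncard :=
  h.branch_eq hv ▸ h.ncard_le v hv

lemma ncard_branch_lt [Finite V] (h : IsStarCut H r W) (hv : v ∈ W) (hvW' : v ∉ W') :
    (H.branch r v).ncard < {x | (H.deleteEdges (starEdges r W')).Reachable r x}.ncard :=
  SimpleGraph.ncard_branch_lt (h.not_mem_branch hv)
    (by simp [h.adj v hv, hvW', (h.adj v hv).ne'])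
    (fun a b hab ha hb => by simp [hab, ha, hb])

lemma subset_or_subset [Finite V] (h : IsStarCut H r W) (h' : IsStarCut H r W') :
    W ⊆ W' ∨ W' ⊆ W := by
  by_contra! hc
  obtain ⟨v, hv, hv'⟩ := not_subset.1 hc.1
  obtain ⟨w, hw', hw⟩ := not_subset.1 hc.2
  have := h.ncard_le_ncard_branch hv
  have := h.ncard_branch_lt hv hv'
  have := h'.ncard_le_ncard_branch hw'
  have := h'.ncard_branch_lt hw' hw
  omega

lemma isLightBranch [Fintype V] (h : IsStarCut H r W) (h' : IsStarCut H r W') (hv : v ∈ W')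
    (hvW : v ∉ W) : H.IsLightBranch r v := by
  refine ⟨h'.adj v hv, isBridge_iff.2 fun hr => h'.not_mem_branch hv hr.symm, ?_⟩
  have := h'.ncard_branch_lt hv hvW
  have := h.two_mul_ncard_le
  omega

end IsStarCut

section Counting

open Classical

variable [Fintype V] {H : SimpleGraph V}

noncomputable def starCuts (H : SimpleGraph V) : Finset (V × Finset V) :=
  univ.filter fun p => IsStarCut H p.1 p.2

lemma mem_starCuts {p : V × Finset V} : p ∈ starCuts H ↔ IsStarCut H p.1 p.2 := by
  simp [starCuts]

/-- The cuts at `r` are nested, so their sizes are distinct, and each exceeds the smallest one by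
at most the number of light branches at `r`. -/
lemma card_starCuts_filter_le (r : V) :
    ((starCuts H).filter (·.1 = r)).card ≤ (univ.filter (H.IsLightBranch r)).card + 1 := by
  set F := (starCuts H).filter (·.1 = r)
  set L := univ.filter (H.IsLightBranch r)
  rcases F.eq_empty_or_nonempty with hF | hF
  · simp [hF]
  have hcut : ∀ p ∈ F, p.1 = r ∧ IsStarCut H r p.2 := fun p hp => by
    have hp := mem_filter.1 hp
    exact ⟨hp.2, hp.2 ▸ mem_starCuts.1 hp.1⟩
  obtain ⟨p₀, hp₀, hmin⟩ := F.exists_min_image (fun p => p.2.card) hF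
  calc F.card ≤ (Icc p₀.2.card (p₀.2.card + L.card)).card := by
        refine card_le_card_of_injOn (fun p => p.2.card) (fun p hp => ?_) (fun p hp q hq hpq => ?_)
        · have hsub : p.2 \ p₀.2 ⊆ L := fun v hv => by
            obtain ⟨hvp, hvp₀⟩ := mem_sdiff.1 hv
            exact mem_filter.2 ⟨mem_univ v, (hcut p₀ hp₀).2.isLightBranch (hcut p hp).2 hvp hvp₀⟩
          have := card_le_card hsub
          have := card_le_card_sdiff_add_card (s := p.2) (t := p₀.2)
          simp only [coe_Icc, Set.mem_Icc]
          exact ⟨hmin p hp, by omega⟩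
        · have hpq : p.2.card = q.2.card := hpq
          refine Prod.ext ((hcut p hp).1.trans (hcut q hq).1.symm) ?_
          rcases (hcut p hp).2.subset_or_subset (hcut q hq).2 with hs | hs
          exacts [eq_of_subset_of_card_le hs hpq.ge, (eq_of_subset_of_card_le hs hpq.le).symm]
    _ = L.card + 1 := by simp; omega

theorem card_starCuts_lt (hH : H.Connected) : (starCuts H).card < 2 * Fintype.card V := by
  obtain ⟨x, hx⟩ := exists_forall_not_isLightBranch hH
  have hdisj :
      ((univ : Finset V) : Set V).PairwiseDisjoint fun r => univ.filter (H.IsLightBranch r) :=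
    fun r _ r' _ hne => disjoint_filter.2 fun v _ h h' => hne (h.eq hH.preconnected h')
  have hlight : ∑ r, (univ.filter (H.IsLightBranch r)).card < Fintype.card V := by
    rw [← card_biUnion hdisj]
    calc _ ≤ (univ.erase x).card := card_le_card fun v hv => by
          obtain ⟨r, -, hr⟩ := mem_biUnion.1 hv
          exact mem_erase.2 ⟨fun hvx => hx r (hvx ▸ (mem_filter.1 hr).2), mem_univ v⟩
      _ < Fintype.card V := card_erase_lt_of_mem (mem_univ x)
  calc (starCuts H).card = ∑ r, ((starCuts H).filter (·.1 = r)).card :=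
        card_eq_sum_card_fiberwise fun p _ => mem_univ p.1
    _ ≤ ∑ r, ((univ.filter (H.IsLightBranch r)).card + 1) :=
        sum_le_sum fun r _ => card_starCuts_filter_le r
    _ < 2 * Fintype.card V := by
        rw [sum_add_distrib]
        simp only [sum_const, card_univ, smul_eq_mul, mul_one]
        omega

end Counting

def Iso.deleteStarEdges {H : SimpleGraph V} {H' : SimpleGraph V'} (φ : H ≃g H') (r : V)
    (W : Finset V) :
    H.deleteEdges (starEdges r W) ≃g
      H'.deleteEdges (starEdges (φ r) (W.map φ.toEquiv.toEmbedding)) where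
  toEquiv := φ.toEquiv
  map_rel_iff' {a b} := by
    have hφ : ∀ x, φ.toEquiv.symm (φ x) = x := φ.toEquiv.symm_apply_apply
    simp [Finset.mem_map_equiv, hφ, φ.map_adj_iff]

lemma IsStarCut.map {H : SimpleGraph V} {H' : SimpleGraph V'} {r : V} {W : Finset V}
    (φ : H ≃g H') (h : IsStarCut H r W) :
    IsStarCut H' (φ r) (W.map φ.toEquiv.toEmbedding) := by
  have hreach : ∀ u v, (H'.deleteEdges (starEdges (φ r) (W.map φ.toEquiv.toEmbedding))).Reachable
      (φ u) (φ v) ↔ (H.deleteEdges (starEdges r W)).Reachable u v :=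
    fun _ _ => Iso.reachable_iff (φ := φ.deleteStarEdges r W)
  have hcard : ∀ u,
      {x | (H'.deleteEdges (starEdges (φ r) (W.map φ.toEquiv.toEmbedding))).Reachable (φ u) x}.ncard
        = {x | (H.deleteEdges (starEdges r W)).Reachable u x}.ncard :=
    Iso.ncard_setOf_reachable (φ.deleteStarEdges r W)
  refine ⟨h.nonempty.map, forall_mem_map.2 fun v hv => φ.map_adj_iff.2 (h.adj v hv),
    forall_mem_map.2 fun v hv => (hreach r v).not.2 (h.not_reachable_root v hv),
    forall_mem_map.2 fun v hv => forall_mem_map.2 fun w hw hne =>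
      (hreach v w).not.2 (h.not_reachable v hv w hw (ne_of_apply_ne _ hne)),
    fun x => ?_,
    forall_mem_map.2 fun v hv => (hcard r).trans_le ((h.ncard_le v hv).trans (hcard v).ge)⟩
  obtain ⟨x, rfl⟩ := φ.surjective x
  rcases h.reachable x with hx | ⟨v, hv, hvx⟩
  exacts [Or.inl ((hreach r x).2 hx), Or.inr ⟨φ v, mem_map_of_mem _ hv, (hreach v x).2 hvx⟩]

lemma reachable_sup_starEdges {G : SimpleGraph V} {r x : V} {W : Finset V}
    (h : (G ⊔ fromEdgeSet (starEdges r W)).Reachable r x) :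
    G.Reachable r x ∨ ∃ w ∈ W, G.Reachable w x := by
  refine h.mem_of_adj_closed (S := {y | G.Reachable r y ∨ ∃ w ∈ W, G.Reachable w y}) ?_
    (Or.inl Reachable.rfl)
  rintro a b hab ha
  rcases hab with hab | ⟨hab, -⟩
  · exact ha.imp (·.trans hab.reachable) fun ⟨w, hw, hwa⟩ => ⟨w, hw, hwa.trans hab.reachable⟩
  · rcases mk_mem_starEdges.1 hab with ⟨-, hb⟩ | ⟨rfl, -⟩
    exacts [Or.inr ⟨b, hb, Reachable.rfl⟩, Or.inl Reachable.rfl]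

lemma sup_starEdges_mem {A : SimpleGraph V → Prop}
    (hA : ∀ G, A G → ∀ u v, ¬ G.Reachable u v → A (G ⊔ fromEdgeSet {s(u, v)}))
    {G : SimpleGraph V} (hG : A G) {r : V} {W : Finset V} (hr : ∀ w ∈ W, ¬ G.Reachable r w)
    (hW : ∀ v ∈ W, ∀ w ∈ W, v ≠ w → ¬ G.Reachable v w) :
    A (G ⊔ fromEdgeSet (starEdges r W)) := by
  classical
  induction W using Finset.induction_on with
  | empty => simpa [starEdges] using hG
  | @insert a W ha ih =>
    have hGW := ih (fun w hw => hr w (mem_insert_of_mem hw))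
      (fun v hv w hw => hW v (mem_insert_of_mem hv) w (mem_insert_of_mem hw))
    have hra : ¬ (G ⊔ fromEdgeSet (starEdges r W)).Reachable r a := fun hra =>
      (reachable_sup_starEdges hra).elim (hr a (mem_insert_self a W))
        fun ⟨w, hw, hwa⟩ => hW w (mem_insert_of_mem hw) a (mem_insert_self a W)
          (fun hwa' => ha (hwa' ▸ hw)) hwa
    convert hA _ hGW r a hra using 1
    rw [sup_assoc, ← fromEdgeSet_union, starEdges, starEdges, coe_insert, Set.image_insert_eq,
      Set.insert_eq, Set.union_comm]

lemma exists_transversal [Fintype V] (G : SimpleGraph V) (r : V) :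
    ∃ W : Finset V, (∀ w ∈ W, ¬ G.Reachable r w) ∧
      (∀ v ∈ W, ∀ w ∈ W, v ≠ w → ¬ G.Reachable v w) ∧
      ∀ x, G.Reachable r x ∨ ∃ w ∈ W, G.Reachable w x := by
  classical
  set rep := fun x => (G.connectedComponentMk x).out
  have hrep : ∀ x, G.Reachable (rep x) x := fun x =>
    ConnectedComponent.eq.1 (G.connectedComponentMk x).out_eq
  have hrep_eq : ∀ x y, G.Reachable x y → rep x = rep y := fun x y hxy => by
    simp only [rep, ConnectedComponent.eq.2 hxy]
  refine ⟨univ.filter fun v => rep v = v ∧ ¬ G.Reachable r v, fun w hw => (mem_filter.1 hw).2.2,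
    fun v hv w hw hne hvw => hne ?_, fun x => (em _).imp_right fun hx => ⟨rep x, ?_, hrep x⟩⟩
  · rw [← (mem_filter.1 hv).2.1, ← (mem_filter.1 hw).2.1, hrep_eq v w hvw]
  · exact mem_filter.2 ⟨mem_univ _, (hrep_eq _ _ (hrep x)), fun hr => hx (hr.trans (hrep x))⟩

lemma deleteEdges_sup_starEdges {G : SimpleGraph V} {r : V} {W : Finset V}
    (hr : ∀ w ∈ W, ¬ G.Reachable r w) :
    (G ⊔ fromEdgeSet (starEdges r W)).deleteEdges (starEdges r W) = G := by
  ext a b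
  simp only [deleteEdges_adj, sup_adj, fromEdgeSet_adj, mk_mem_starEdges]
  refine ⟨fun ⟨hab, hnot⟩ => hab.resolve_right fun h => hnot h.1, fun hab => ⟨Or.inl hab, ?_⟩⟩
  rintro (⟨rfl, hb⟩ | ⟨rfl, ha⟩)
  exacts [hr b hb hab.reachable, hr a ha hab.symm.reachable]

lemma isStarCut_sup_starEdges {G : SimpleGraph V} {r : V} {W : Finset V} (hW : W.Nonempty)
    (hr : ∀ w ∈ W, ¬ G.Reachable r w) (hW' : ∀ v ∈ W, ∀ w ∈ W, v ≠ w → ¬ G.Reachable v w)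
    (hcover : ∀ x, G.Reachable r x ∨ ∃ w ∈ W, G.Reachable w x)
    (hmin : ∀ w ∈ W, {x | G.Reachable r x}.ncard ≤ {x | G.Reachable w x}.ncard) :
    IsStarCut (G ⊔ fromEdgeSet (starEdges r W)) r W := by
  refine ⟨hW, fun v hv => Or.inr ⟨by simp [hv], fun hrv => hr v hv (hrv ▸ Reachable.rfl)⟩,
    ?_, ?_, ?_, ?_⟩ <;> rw [deleteEdges_sup_starEdges hr]
  exacts [hr, hW', hcover, hmin]

theorem exists_isStarCut_deleteEdges_eq [Fintype V] [Nonempty V] {A : SimpleGraph V → Prop}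
    (hA : ∀ G, A G → ∀ u v, ¬ G.Reachable u v → A (G ⊔ fromEdgeSet {s(u, v)}))
    {G : SimpleGraph V} (hG : A G) (hG' : ¬ G.Connected) :
    ∃ H r W, A H ∧ IsStarCut H r W ∧ H.deleteEdges (starEdges r W) = G := by
  obtain ⟨r, hr⟩ := Finite.exists_min fun x => {y | G.Reachable x y}.ncard
  obtain ⟨W, hrW, hW, hcover⟩ := exists_transversal G r
  have hne : W.Nonempty := by
    have hdisc : ∀ x, ∃ y, ¬ G.Reachable x y := by
      simpa [connected_iff_exists_forall_reachable] using hG'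
    obtain ⟨x, hx⟩ := hdisc r
    obtain ⟨w, hw, -⟩ := (hcover x).resolve_left hx
    exact ⟨w, hw⟩
  exact ⟨_, r, W, sup_starEdges_mem hA hG hrW hW,
    isStarCut_sup_starEdges hne hrW hW hcover fun w _ => hr w, deleteEdges_sup_starEdges hrW⟩

end SimpleGraph

open SimpleGraph

section Unlabelled

variable {n : ℕ}

lemma unlabelledCount_le_add (A P : SimpleGraph (Fin n) → Prop) :
    unlabelledCount n A ≤
      unlabelledCount n (fun G => A G ∧ P G) + unlabelledCount n (fun G => A G ∧ ¬ P G) := by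
  let incl (B : SimpleGraph (Fin n) → Prop) (hB : ∀ G, B G → A G) :
      Quotient (graphSetoid n B) → Quotient (graphSetoid n A) :=
    Quotient.map (fun G => ⟨G.1, hB _ G.2⟩) fun _ _ => id
  have hsurj : Function.Surjective
      (Sum.elim (incl (fun G => A G ∧ P G) fun _ h => h.1)
        (incl (fun G => A G ∧ ¬ P G) fun _ h => h.1)) := by
    rintro ⟨G, hG⟩
    by_cases hP : P G
    exacts [⟨.inl ⟦⟨G, hG, hP⟩⟧, rfl⟩, ⟨.inr ⟦⟨G, hG, hP⟩⟧, rfl⟩]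
  simpa [unlabelledCount, Nat.card_sum] using Nat.card_le_card_of_surjective _ hsurj

lemma unlabelledCount_pos {A : SimpleGraph (Fin n) → Prop} (hA : ∃ G, A G) :
    0 < unlabelledCount n A :=
  have ⟨G, hG⟩ := hA
  have : Nonempty (Quotient (graphSetoid n A)) := ⟨⟦⟨G, hG⟩⟧⟩
  Nat.card_pos

theorem unlabelledCount_le_two_mul (hn : 0 < n) {A : SimpleGraph (Fin n) → Prop}
    (hba : BridgeAddable n A) :
    unlabelledCount n A ≤ 2 * n * unlabelledCount n (fun G => A G ∧ G.Connected) := by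
  have : Nonempty (Fin n) := ⟨⟨0, hn⟩⟩
  let C := Quotient (graphSetoid n fun G => A G ∧ G.Connected)
  let D := Quotient (graphSetoid n fun G => A G ∧ ¬ G.Connected)
  have : Fintype C := Fintype.ofFinite C
  have hencode : ∀ d : D, ∃ t : Σ c : C, starCuts (Quotient.out c).1,
      Nonempty (d.out.1 ≃g (Quotient.out t.1).1.deleteEdges (starEdges t.2.1.1 t.2.1.2)) := by
    intro d
    obtain ⟨H, r, W, hAH, hcut, hdel⟩ := exists_isStarCut_deleteEdges_eq hba d.out.2.1 d.out.2.2
    let c : C := ⟦⟨H, hAH, hcut.connected⟩⟧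
    obtain ⟨φ⟩ : Nonempty ((Quotient.out c).1 ≃g H) := Quotient.mk_out (s := graphSetoid n _) _
    refine ⟨⟨c, (φ.symm r, W.map φ.symm.toEquiv.toEmbedding), mem_starCuts.2 (hcut.map φ.symm)⟩,
      ⟨?_⟩⟩
    rw [← hdel]
    exact φ.symm.deleteStarEdges r W
  choose f hf using hencode
  have hinj : Function.Injective f := fun d d' hdd' => by
    obtain ⟨φ⟩ := hf d
    obtain ⟨φ'⟩ := hf d'
    rw [hdd'] at φ
    rw [← Quotient.out_eq d, ← Quotient.out_eq d']
    exact Quotient.sound ⟨φ.trans φ'.symm⟩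
  calc unlabelledCount n A ≤ Nat.card C + Nat.card D := unlabelledCount_le_add A Connected
    _ ≤ Nat.card C + Nat.card (Σ c : C, starCuts (Quotient.out c).1) :=
        Nat.add_le_add_left (Nat.card_le_card_of_injective f hinj) _
    _ = ∑ c : C, ((starCuts (Quotient.out c).1).card + 1) := by
        simp [sum_add_distrib, add_comm]
    _ ≤ ∑ _c : C, 2 * n := sum_le_sum fun c _ => by
        simpa using card_starCuts_lt (Quotient.out c).2.2
    _ = 2 * n * Nat.card C := by
        rw [sum_const, card_univ, Nat.card_eq_fintype_card, smul_eq_mul, mul_comm]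

end Unlabelled

theorem prob_connected_ge_one_div_two_n_general (n : ℕ) (hn : 0 < n)
    (A : SimpleGraph (Fin n) → Prop)
    (hba : BridgeAddable n A) (hne : ∃ G, A G) :
    (1 : ℝ) / (2 * n) ≤
      (unlabelledCount n (fun G => A G ∧ G.Connected) : ℝ) / unlabelledCount n A := by
  have hpos : (0 : ℝ) < unlabelledCount n A := by exact_mod_cast unlabelledCount_pos hne
  have hle : (unlabelledCount n A : ℝ) ≤
      2 * n * unlabelledCount n (fun G => A G ∧ G.Connected) := by
    exact_mod_cast unlabelledCount_le_two_mul hn hba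
  rw [div_le_div_iff₀ (by positivity) hpos]
  linarith

/-- If `A` is bridge-addable (and closed under isomorphism) and `Ã_n` is nonempty,
then a uniformly random unlabelled `n`-vertex graph in `A` is connected with
probability at least `1/(2n)`. -/
theorem prob_connected_ge_one_div_two_n (n : ℕ) (hn : 0 < n)
    (A : SimpleGraph (Fin n) → Prop)
    (hiso : IsoClosed n A) (hba : BridgeAddable n A) (hne : ∃ G, A G) :
    (1 : ℝ) / (2 * n) ≤
      (unlabelledCount n (fun G => A G ∧ G.Connected) : ℝ) / unlabelledCount n A :=
  prob_connected_ge_one_div_two_n_general n hn A hba hne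
end
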